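/- arXiv:math-ph/0402031 — 7 statements merged into one kernel-verified Lean document; each statement's English description precedes it below -/
import Mathlib

section
/- Let π₁, π₋₁ be N×N complex matrices and S an invertible N×N complex matrix. For c ∈ ℂ, c ≠ 0, set u(c) = I + (c−1)π₁ + (c⁻¹−1)π₋₁. Then u(c)·S·u(c)ᵀ·S⁻¹ = I holds for every nonzero c ∈ ℂ if and only if the four algebraic equations hold: (E1) π₁Sπ₁ᵀS⁻¹ = 0; (E2) π₋₁Sπ₋₁ᵀS⁻¹ = 0; (E3) π₁ + Sπ₁ᵀS⁻¹ − π₁Sπ₋₁ᵀS⁻¹ − π₋₁Sπ₁ᵀS⁻¹ = 0; (E4) π₋₁ + Sπ₋₁ᵀS⁻¹ − π₁Sπ₋₁ᵀS⁻¹ − π₋₁Sπ₁ᵀS⁻¹ = 0. -/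
/-!
With `τ M = S * Mᵀ * S⁻¹`, a linear map fixing `1`, the group condition reads `u(c) * τ (u(c)) = 1`.
Expanding, and using `(c - 1) * (c⁻¹ - 1) = -(c - 1) - (c⁻¹ - 1)` to absorb the cross terms, shows that
`c² • (u(c) * τ (u(c)) - 1)` is a polynomial in `c` with coefficients
`B, Y - 2B, A + B - X - Y, X - 2A, A`, where `A, B, X, Y` are the left-hand sides of (E1)–(E4).
It vanishes at infinitely many `c` exactly when these coefficients vanish, i.e. when (E1)–(E4) hold.
-/

open Matrix

open Polynomial in
theorem eq_zero_of_forall_sum_pow_smul_eq_zero {K V : Type*} [Field K] [AddCommGroup V]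
    [Module K V] {n : ℕ} (v : Fin n → V) {T : Set K} (hT : T.Infinite)
    (h : ∀ c ∈ T, ∑ i : Fin n, c ^ (i : ℕ) • v i = 0) : v = 0 := by
  funext i
  refine (Module.forall_dual_apply_eq_zero_iff K (v i)).mp fun φ => ?_
  set p : K[X] := ∑ j, C (φ (v j)) * X ^ (j : ℕ)
  have hp : p = 0 := by
    refine eq_zero_of_infinite_isRoot p (hT.mono fun c hc => ?_)
    simpa [p, eval_finsetSum, mul_comm (φ _)] using congrArg φ (h c hc)
  simpa [p, finsetSum_coeff, coeff_C_mul_X_pow, Fin.val_inj] using congrArg (coeff · i) hp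

section Dressing

variable {K R : Type*} [Field K] [Ring R] [Algebra K R]

def dressingFactor (P Q : R) (c : K) : R := 1 + (c - 1) • P + (c⁻¹ - 1) • Q

theorem sq_smul_dressingFactor_mul_map_sub_one (τ : R →ₗ[K] R) (hτ : τ 1 = 1) (P Q : R)
    {c : K} (hc : c ≠ 0) :
    c ^ 2 • (dressingFactor P Q c * τ (dressingFactor P Q c) - 1) =
      Q * τ Q + c • (Q + τ Q - P * τ Q - Q * τ P - 2 • (Q * τ Q)) +
        c ^ 2 • (P * τ P + Q * τ Q - (P + τ P - P * τ Q - Q * τ P) -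
          (Q + τ Q - P * τ Q - Q * τ P)) +
        c ^ 3 • (P + τ P - P * τ Q - Q * τ P - 2 • (P * τ P)) + c ^ 4 • (P * τ P) := by
  simp only [dressingFactor, map_add, map_smul, hτ, add_mul, mul_add, smul_mul_assoc,
    mul_smul_comm, one_mul, mul_one, smul_add, smul_sub, smul_smul]
  match_scalars <;> field_simp <;> ring

theorem forall_dressingFactor_mul_map_eq_one_iff [Infinite K] (τ : R →ₗ[K] R) (hτ : τ 1 = 1)
    (P Q : R) :
    (∀ c : K, c ≠ 0 → dressingFactor P Q c * τ (dressingFactor P Q c) = 1) ↔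
      P * τ P = 0 ∧ Q * τ Q = 0 ∧ P + τ P - P * τ Q - Q * τ P = 0 ∧
        Q + τ Q - P * τ Q - Q * τ P = 0 := by
  have expand := fun c (hc : c ≠ 0) => sq_smul_dressingFactor_mul_map_sub_one τ hτ P Q hc
  set A := P * τ P
  set B := Q * τ Q
  set X := P + τ P - P * τ Q - Q * τ P
  set Y := Q + τ Q - P * τ Q - Q * τ P
  constructor
  · intro h
    have hcoeff := eq_zero_of_forall_sum_pow_smul_eq_zero
      ![B, Y - 2 • B, A + B - X - Y, X - 2 • A, A] (Set.finite_singleton (0 : K)).infinite_compl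
      fun c hc => by
        simpa [Fin.sum_univ_five, h c hc] using (expand c hc).symm
    have hA : A = 0 := congrFun hcoeff 4
    have hB : B = 0 := congrFun hcoeff 0
    have hX : X - 2 • A = 0 := congrFun hcoeff 3
    have hY : Y - 2 • B = 0 := congrFun hcoeff 1
    rw [hA, smul_zero, sub_zero] at hX
    rw [hB, smul_zero, sub_zero] at hY
    exact ⟨hA, hB, hX, hY⟩
  · rintro ⟨hA, hB, hX, hY⟩ c hc
    simpa [hA, hB, hX, hY, hc, sub_eq_zero] using expand c hc

end Dressing

namespace Matrix

variable {n α : Type*} [Fintype n] [DecidableEq n] [CommRing α]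

noncomputable def twistedTranspose (S : Matrix n n α) : Matrix n n α →ₗ[α] Matrix n n α where
  toFun M := S * Mᵀ * S⁻¹
  map_add' M N := by simp only [transpose_add, Matrix.mul_add, Matrix.add_mul]
  map_smul' c M := by
    simp only [transpose_smul, Matrix.mul_smul, Matrix.smul_mul, RingHom.id_apply]

theorem twistedTranspose_apply (S M : Matrix n n α) : twistedTranspose S M = S * Mᵀ * S⁻¹ := rfl

theorem twistedTranspose_one {S : Matrix n n α} (hS : IsUnit S.det) :
    twistedTranspose S 1 = 1 := by
  rw [twistedTranspose_apply, transpose_one, Matrix.mul_one, mul_nonsing_inv S hS]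

end Matrix

/-- the dressing factor `u(c) = 1 + (c-1)•π₁ + (c⁻¹-1)•π₋₁` satisfies
`u(c) * S * u(c)ᵀ * S⁻¹ = 1` for every nonzero `c` iff the four algebraic equations
(E1)–(E4) hold. -/
theorem dressing_factor_group_condition_iff {N : ℕ}
    (π₁ πm S : Matrix (Fin N) (Fin N) ℂ) (hS : IsUnit S.det) :
    (∀ c : ℂ, c ≠ 0 →
      ((1 : Matrix (Fin N) (Fin N) ℂ) + (c - 1) • π₁ + (c⁻¹ - 1) • πm) * S *
        ((1 : Matrix (Fin N) (Fin N) ℂ) + (c - 1) • π₁ + (c⁻¹ - 1) • πm)ᵀ * S⁻¹ = 1) ↔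
    (π₁ * S * π₁ᵀ * S⁻¹ = 0 ∧
     πm * S * πmᵀ * S⁻¹ = 0 ∧
     π₁ + S * π₁ᵀ * S⁻¹ - π₁ * S * πmᵀ * S⁻¹ - πm * S * π₁ᵀ * S⁻¹ = 0 ∧
     πm + S * πmᵀ * S⁻¹ - π₁ * S * πmᵀ * S⁻¹ - πm * S * π₁ᵀ * S⁻¹ = 0) := by
  simpa only [dressingFactor, twistedTranspose_apply, Matrix.mul_assoc] using
    forall_dressingFactor_mul_map_eq_one_iff (twistedTranspose S) (twistedTranspose_one hS) π₁ πm
end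

section
/- Let σ ∈ {+1, −1} and let S be an invertible N×N complex matrix with Sᵀ = σS and S⁻¹ = σS. Let n, m be N×r₁ complex matrices with nᵀSn = 0 and mᵀSm = 0, and let A, B be r₁×r₁ complex matrices with Aᵀ = −σA and Bᵀ = −σB. Assume ρ := mᵀn is invertible and R := ρ − σA(ρᵀ)⁻¹B is invertible. Define Y = (n + Sm(ρᵀ)⁻¹B)R⁻¹, X = (m + Snρ⁻¹A)(Rᵀ)⁻¹, π₁ = Ymᵀ and π₋₁ = SXnᵀS⁻¹. Then the four algebraic equations hold: (E1) π₁Sπ₁ᵀS⁻¹ = 0; (E2) π₋₁Sπ₋₁ᵀS⁻¹ = 0; (E3) π₁ + Sπ₁ᵀS⁻¹ − π₁Sπ₋₁ᵀS⁻¹ − π₋₁Sπ₁ᵀS⁻¹ = 0; (E4) π₋₁ + Sπ₋₁ᵀS⁻¹ − π₁Sπ₋₁ᵀS⁻¹ − π₋₁Sπ₁ᵀS⁻¹ = 0. -/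
/-!
Write `M† = S Mᵀ S⁻¹`; then `π₋₁† = n Xᵀ`, so (E1) and (E2) come from `mᵀ S m = 0` and
`nᵀ S n = 0`, and the cross terms of (E3), (E4) are `T = Y ρ Xᵀ` and `T†`. Both equations then
follow from the identities `Y ρ = n + S X B` and `X ρᵀ = m + S Y A`. By the definitions of `Y`
and `X`, their defects `U = Y ρ - n - S X B` and `V = X ρᵀ - m - S Y A` satisfy
`U = -S V (ρᵀ)⁻¹ B` and `V = -S U ρ⁻¹ A`; hence `U = σ U ρ⁻¹ A (ρᵀ)⁻¹ B`, i.e. `U ρ⁻¹ R = 0`,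
and invertibility of `R` forces `U = V = 0`.
-/

open Matrix

namespace ZakharovMikhailov

variable {K ι κ : Type*} [CommRing K] [Fintype ι] [Fintype κ] {σ : K}

theorem mul_transpose_mul_mul_transpose_eq_zero {ι' : Type*} {S : Matrix ι ι K}
    {m : Matrix ι κ K} (hm : mᵀ * S * m = 0) (Y : Matrix ι' κ K) :
    Y * mᵀ * S * (Y * mᵀ)ᵀ = 0 := by
  rw [transpose_mul, transpose_transpose, ← Matrix.mul_assoc, Matrix.mul_assoc Y,
    Matrix.mul_assoc Y, hm, Matrix.mul_zero, Matrix.zero_mul]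

variable [DecidableEq ι]

theorem mul_self_eq_smul_one_of_inv_eq_smul {S : Matrix ι ι K} (hσ : σ * σ = 1)
    (hS : IsUnit S.det) (hSinv : S⁻¹ = σ • S) : S * S = σ • 1 := by
  have h := mul_nonsing_inv S hS
  rw [hSinv, Matrix.mul_smul] at h
  rw [← h, smul_smul, hσ, one_smul]

theorem mul_transpose_conj_mul_inv {S : Matrix ι ι K} (hσ : σ * σ = 1) (hS : IsUnit S.det)
    (hST : Sᵀ = σ • S) (hSinv : S⁻¹ = σ • S) (M : Matrix ι ι K) :
    S * (S * M * S⁻¹)ᵀ * S⁻¹ = Mᵀ := by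
  have hSinvT : S⁻¹ᵀ = S := by rw [hSinv, transpose_smul, hST, smul_smul, hσ, one_smul]
  calc S * (S * M * S⁻¹)ᵀ * S⁻¹ = S * S * Mᵀ * (Sᵀ * S⁻¹) := by
        simp only [transpose_mul, hSinvT, Matrix.mul_assoc]
    _ = Mᵀ := by
        rw [mul_self_eq_smul_one_of_inv_eq_smul hσ hS hSinv, hST]
        simp only [Matrix.smul_mul, Matrix.mul_smul, mul_nonsing_inv S hS, Matrix.one_mul,
          Matrix.mul_one, smul_smul, hσ, one_smul]

theorem transpose_sub_smul_mul_inv_transpose_mul [DecidableEq κ] (hσ : σ * σ = 1)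
    {ρ A B : Matrix κ κ K} (hA : Aᵀ = -σ • A) (hB : Bᵀ = -σ • B) :
    (ρ - σ • (A * (ρᵀ)⁻¹ * B))ᵀ = ρᵀ - σ • (B * ρ⁻¹ * A) := by
  simp only [transpose_sub, transpose_smul, transpose_mul, transpose_nonsing_inv,
    transpose_transpose, hA, hB, Matrix.smul_mul, Matrix.mul_smul, smul_smul, neg_mul, mul_neg,
    neg_neg, hσ, mul_one, Matrix.mul_assoc]

theorem mul_sub_sub_eq_neg_mul [DecidableEq κ] {S : Matrix ι ι K} (hSS : S * S = σ • 1)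
    {Y X n m : Matrix ι κ K} {Q P R A B : Matrix κ κ K} (hP : IsUnit P.det)
    (hR : R = Q - σ • (A * P⁻¹ * B)) (hYR : Y * R = n + S * m * P⁻¹ * B) :
    Y * Q - n - S * X * B = -(S * (X * P - m - S * Y * A) * P⁻¹ * B) := by
  have hYQ : Y * Q = Y * R + σ • (Y * A * P⁻¹ * B) := by
    rw [hR, Matrix.mul_sub, Matrix.mul_smul]
    simp only [Matrix.mul_assoc, sub_add_cancel]
  rw [hYQ, hYR]
  simp only [Matrix.sub_mul, Matrix.mul_sub, Matrix.mul_assoc, mul_nonsing_inv_cancel_left _ _ hP]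
  rw [← Matrix.mul_assoc S S, hSS]
  simp only [Matrix.smul_mul, Matrix.one_mul]
  abel

theorem eq_zero_of_eq_neg_mul_of_eq_neg_mul [DecidableEq κ] {S : Matrix ι ι K}
    (hSS : S * S = σ • 1) {ρ R A B : Matrix κ κ K} (hρ : IsUnit ρ.det) (hR : IsUnit R.det)
    (hRdef : R = ρ - σ • (A * (ρᵀ)⁻¹ * B)) {U V : Matrix ι κ K}
    (hU : U = -(S * V * (ρᵀ)⁻¹ * B)) (hV : V = -(S * U * ρ⁻¹ * A)) : U = 0 := by
  have hUU : U = σ • (U * ρ⁻¹ * A * (ρᵀ)⁻¹ * B) := by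
    conv_lhs => rw [hU, hV]
    simp only [Matrix.neg_mul, Matrix.mul_neg, neg_neg, ← Matrix.mul_assoc, hSS,
      Matrix.smul_mul, Matrix.one_mul]
  have hUR : U * ρ⁻¹ * R = 0 := by
    rw [hRdef, Matrix.mul_sub, nonsing_inv_mul_cancel_right _ _ hρ, Matrix.mul_smul]
    simp only [← Matrix.mul_assoc]
    rw [← hUU, sub_self]
  calc U = U * ρ⁻¹ * R * (R⁻¹ * ρ) := by
        rw [← Matrix.mul_assoc, mul_nonsing_inv_cancel_right _ _ hR,
          nonsing_inv_mul_cancel_right _ _ hρ]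
  _ = 0 := by rw [hUR, Matrix.zero_mul]

theorem mul_eq_add_and_mul_transpose_eq_add [DecidableEq κ] (hσ : σ * σ = 1)
    {S : Matrix ι ι K} (hSS : S * S = σ • 1) {ρ R A B : Matrix κ κ K} (hA : Aᵀ = -σ • A)
    (hB : Bᵀ = -σ • B) (hρ : IsUnit ρ.det) (hR : IsUnit R.det)
    (hRdef : R = ρ - σ • (A * (ρᵀ)⁻¹ * B)) {Y X n m : Matrix ι κ K}
    (hYR : Y * R = n + S * m * (ρᵀ)⁻¹ * B) (hXR : X * Rᵀ = m + S * n * ρ⁻¹ * A) :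
    Y * ρ = n + S * X * B ∧ X * ρᵀ = m + S * Y * A := by
  have hρT : IsUnit ρᵀ.det := by rwa [det_transpose]
  have hRT : Rᵀ = ρᵀ - σ • (B * ρ⁻¹ * A) := by
    rw [hRdef, transpose_sub_smul_mul_inv_transpose_mul hσ hA hB]
  have hU := mul_sub_sub_eq_neg_mul (X := X) hSS hρT hRdef hYR
  have hV := mul_sub_sub_eq_neg_mul (X := Y) hSS hρ hRT hXR
  have hU0 := eq_zero_of_eq_neg_mul_of_eq_neg_mul hSS hρ hR hRdef hU hV
  rw [hU0, Matrix.mul_zero, Matrix.zero_mul, Matrix.zero_mul, neg_zero] at hV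
  rw [sub_sub, sub_eq_zero] at hU0 hV
  exact ⟨hU0, hV⟩

theorem add_conj_sub_cross_eq_zero_of_mul_transpose_eq {S : Matrix ι ι K} (hST : Sᵀ = σ • S)
    (hSinv : S⁻¹ = σ • S) (hSS : S * S = σ • 1) {ρ A : Matrix κ κ K} (hA : Aᵀ = -σ • A)
    {Y X m : Matrix ι κ K} (hXρ : X * ρᵀ = m + S * Y * A) :
    Y * mᵀ + S * (Y * mᵀ)ᵀ * S⁻¹ - Y * ρ * Xᵀ - S * (Y * ρ * Xᵀ)ᵀ * S⁻¹ = 0 := by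
  have hT : Y * ρ * Xᵀ = Y * (m + S * Y * A)ᵀ := by
    rw [← hXρ, transpose_mul, transpose_transpose, Matrix.mul_assoc]
  have hTT : (Y * ρ * Xᵀ)ᵀ = (m + S * Y * A) * Yᵀ := by
    rw [← hXρ, transpose_mul, transpose_mul, transpose_transpose, Matrix.mul_assoc]
  rw [hTT, hT]
  simp only [transpose_add, transpose_mul, transpose_transpose, hA, hST, hSinv, Matrix.mul_add,
    Matrix.add_mul, Matrix.smul_mul, Matrix.mul_smul, Matrix.mul_assoc]
  simp only [← Matrix.mul_assoc S S, hSS, Matrix.smul_mul, Matrix.one_mul]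
  module

theorem conj_add_sub_cross_eq_zero_of_mul_eq {S : Matrix ι ι K} (hσ : σ * σ = 1)
    (hS : IsUnit S.det) (hST : Sᵀ = σ • S) {ρ B : Matrix κ κ K} (hB : Bᵀ = -σ • B)
    {Y X n : Matrix ι κ K} (hYρ : Y * ρ = n + S * X * B) :
    S * (X * nᵀ) * S⁻¹ + n * Xᵀ - Y * ρ * Xᵀ - S * (Y * ρ * Xᵀ)ᵀ * S⁻¹ = 0 := by
  have hTT : (Y * ρ * Xᵀ)ᵀ = X * (n + S * X * B)ᵀ := by
    rw [← hYρ, transpose_mul, transpose_transpose]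
  rw [hTT, hYρ]
  simp only [transpose_add, transpose_mul, hB, hST, Matrix.mul_add, Matrix.add_mul,
    Matrix.smul_mul, Matrix.mul_smul, Matrix.mul_assoc, mul_nonsing_inv S hS, Matrix.mul_one]
  linear_combination (norm := module) hσ • (S * (X * (B * Xᵀ)) : Matrix ι ι K)

end ZakharovMikhailov

open ZakharovMikhailov in
/-- the Zakharov–Mikhailov ansatz `π₁ = Ymᵀ`, `π₋₁ = SXnᵀS⁻¹` with
`Y = (n + Sm(ρᵀ)⁻¹B)R⁻¹`, `X = (m + Snρ⁻¹A)(Rᵀ)⁻¹` solves the four algebraic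
equations (E1)–(E4). -/
theorem ZM_ansatz_solves_algebraic_equations {N r₁ : ℕ} (σ : ℂ) (hσ : σ = 1 ∨ σ = -1)
    (S : Matrix (Fin N) (Fin N) ℂ) (hSdet : IsUnit S.det)
    (hST : Sᵀ = σ • S) (hSinv : S⁻¹ = σ • S)
    (n m : Matrix (Fin N) (Fin r₁) ℂ)
    (hn : nᵀ * S * n = 0) (hm : mᵀ * S * m = 0)
    (A B : Matrix (Fin r₁) (Fin r₁) ℂ)
    (hA : Aᵀ = -σ • A) (hB : Bᵀ = -σ • B)
    (ρ R : Matrix (Fin r₁) (Fin r₁) ℂ)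
    (hρdef : ρ = mᵀ * n) (hRdef : R = ρ - σ • (A * (ρᵀ)⁻¹ * B))
    (hρ : IsUnit ρ.det) (hR : IsUnit R.det)
    (Y X : Matrix (Fin N) (Fin r₁) ℂ)
    (hY : Y = (n + S * m * (ρᵀ)⁻¹ * B) * R⁻¹)
    (hX : X = (m + S * n * ρ⁻¹ * A) * (Rᵀ)⁻¹)
    (π₁ πm : Matrix (Fin N) (Fin N) ℂ)
    (hπ₁ : π₁ = Y * mᵀ) (hπm : πm = S * (X * nᵀ) * S⁻¹) :
    π₁ * S * π₁ᵀ * S⁻¹ = 0 ∧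
    πm * S * πmᵀ * S⁻¹ = 0 ∧
    π₁ + S * π₁ᵀ * S⁻¹ - π₁ * S * πmᵀ * S⁻¹ - πm * S * π₁ᵀ * S⁻¹ = 0 ∧
    πm + S * πmᵀ * S⁻¹ - π₁ * S * πmᵀ * S⁻¹ - πm * S * π₁ᵀ * S⁻¹ = 0 := by
  have hσ2 : σ * σ = 1 := by rcases hσ with rfl | rfl <;> norm_num
  have hSS := mul_self_eq_smul_one_of_inv_eq_smul hσ2 hSdet hSinv
  have hYR : Y * R = n + S * m * (ρᵀ)⁻¹ * B := by rw [hY, nonsing_inv_mul_cancel_right _ _ hR]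
  have hXR : X * Rᵀ = m + S * n * ρ⁻¹ * A := by
    rw [hX, nonsing_inv_mul_cancel_right _ _ (by rwa [det_transpose])]
  obtain ⟨hYρ, hXρ⟩ :=
    mul_eq_add_and_mul_transpose_eq_add hσ2 hSS hA hB hρ hR hRdef hYR hXR
  have hπmConj : S * πmᵀ * S⁻¹ = n * Xᵀ := by
    rw [hπm, mul_transpose_conj_mul_inv hσ2 hSdet hST hSinv, transpose_mul, transpose_transpose]
  have hcross : π₁ * S * πmᵀ * S⁻¹ = Y * ρ * Xᵀ := by
    rw [Matrix.mul_assoc π₁, Matrix.mul_assoc, hπmConj, hπ₁, hρdef]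
    simp only [Matrix.mul_assoc]
  have hcrossConj : πm * S * π₁ᵀ * S⁻¹ = S * (Y * ρ * Xᵀ)ᵀ * S⁻¹ := by
    rw [hπm, hπ₁, hρdef]
    simp only [transpose_mul, transpose_transpose, Matrix.mul_assoc,
      nonsing_inv_mul_cancel_left _ _ hSdet]
  refine ⟨?_, ?_, ?_, ?_⟩
  · rw [hπ₁, mul_transpose_mul_mul_transpose_eq_zero hm, Matrix.zero_mul]
  · calc πm * S * πmᵀ * S⁻¹ = πm * (S * πmᵀ * S⁻¹) := by simp only [Matrix.mul_assoc]
      _ = S * X * (nᵀ * S⁻¹ * n) * Xᵀ := by rw [hπmConj, hπm]; simp only [Matrix.mul_assoc]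
      _ = 0 := by
        rw [hSinv, Matrix.mul_smul, Matrix.smul_mul, hn, smul_zero, Matrix.mul_zero,
          Matrix.zero_mul]
  · rw [hcross, hcrossConj, hπ₁]
    exact add_conj_sub_cross_eq_zero_of_mul_transpose_eq hST hSinv hSS hA hXρ
  · rw [hcross, hcrossConj, hπmConj, hπm]
    exact conj_add_sub_cross_eq_zero_of_mul_eq hσ2 hSdet hST hB hYρ
end

section
/- Let S be an invertible N×N complex matrix and let π₁, π₋₁ be N×N complex matrices satisfying π₁ + π₋₁ = I together with the four algebraic equations: (E1) π₁Sπ₁ᵀS⁻¹ = 0; (E2) π₋₁Sπ₋₁ᵀS⁻¹ = 0; (E3) π₁ + Sπ₁ᵀS⁻¹ − π₁Sπ₋₁ᵀS⁻¹ − π₋₁Sπ₁ᵀS⁻¹ = 0; (E4) π₋₁ + Sπ₋₁ᵀS⁻¹ − π₁Sπ₋₁ᵀS⁻¹ − π₋₁Sπ₁ᵀS⁻¹ = 0. Then: (1) π₋₁ = Sπ₁ᵀS⁻¹; (2) π₁² = π₁, π₋₁² = π₋₁, and π₁π₋₁ = π₋₁π₁ = 0 (π₁ and π₋₁ are mutually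 orthogonal projectors). -/
open Matrix

/-! Write `π' = S πᵀ S⁻¹`. Conjugated transposition fixes `I` and is additive, so `π₁' + π₋₁' = I`,
and (E1), (E2) read `π₁ π₁' = 0`, `π₋₁ π₋₁' = 0`. Then
`π₋₁ = π₋₁ (π₁' + π₋₁') = π₋₁ π₁' = (I - π₁) π₁' = π₁'`, and the projector identities follow by
multiplying `π₁ + π₋₁ = I` by `π₁` and by `π₋₁`. -/

theorem eq_and_orthogonal_idempotents_of_mul_eq_zero {R : Type*} [Ring R] {p q p' q' : R}
    (hpq : p + q = 1) (hpq' : p' + q' = 1) (hp : p * p' = 0) (hq : q * q' = 0) :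
    q = p' ∧ p * p = p ∧ q * q = q ∧ p * q = 0 ∧ q * p = 0 := by
  have hq_eq : q = p' :=
    calc q = q * (p' + q') := by rw [hpq', mul_one]
      _ = (p + q) * p' := by rw [mul_add, hq, add_zero, add_mul, hp, zero_add]
      _ = p' := by rw [hpq, one_mul]
  have hq'_eq : q' = p := by
    rw [← add_left_cancel_iff (a := q), add_comm q p, hpq, hq_eq, hpq']
  have hpq0 : p * q = 0 := hq_eq ▸ hp
  have hqp0 : q * p = 0 := hq'_eq ▸ hq
  refine ⟨hq_eq, ?_, ?_, hpq0, hqp0⟩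
  · calc p * p = p * (p + q) := by rw [mul_add, hpq0, add_zero]
      _ = p := by rw [hpq, mul_one]
  · calc q * q = q * (p + q) := by rw [mul_add, hqp0, zero_add]
      _ = q := by rw [hpq, mul_one]

theorem Matrix.mul_transpose_mul_inv_add_eq_one {n R : Type*} [Fintype n] [DecidableEq n]
    [CommRing R] {S P Q : Matrix n n R} (hS : IsUnit S.det) (h : P + Q = 1) :
    S * Pᵀ * S⁻¹ + S * Qᵀ * S⁻¹ = 1 := by
  rw [← add_mul, ← mul_add, ← transpose_add, h, transpose_one, mul_one, mul_nonsing_inv _ hS]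

theorem complementary_poles_are_orthogonal_projectors_general {N : ℕ}
    (S π₁ πm : Matrix (Fin N) (Fin N) ℂ) (hS : IsUnit S.det)
    (hsum : π₁ + πm = 1)
    (hE1 : π₁ * S * π₁ᵀ * S⁻¹ = 0)
    (hE2 : πm * S * πmᵀ * S⁻¹ = 0) :
    πm = S * π₁ᵀ * S⁻¹ ∧
    π₁ * π₁ = π₁ ∧ πm * πm = πm ∧ π₁ * πm = 0 ∧ πm * π₁ = 0 :=
  eq_and_orthogonal_idempotents_of_mul_eq_zero hsum (mul_transpose_mul_inv_add_eq_one hS hsum)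
    (by simpa only [Matrix.mul_assoc] using hE1) (by simpa only [Matrix.mul_assoc] using hE2)

/-- Lemma on `π₁ + π₋₁ = 1`: if `π₁ + π₋₁ = 1` and the four algebraic
equations (E1)–(E4) hold, then `π₋₁ = Sπ₁ᵀS⁻¹` and `π₁`, `π₋₁` are mutually
orthogonal projectors. -/
theorem complementary_poles_are_orthogonal_projectors {N : ℕ}
    (S π₁ πm : Matrix (Fin N) (Fin N) ℂ) (hS : IsUnit S.det)
    (hsum : π₁ + πm = 1)
    (hE1 : π₁ * S * π₁ᵀ * S⁻¹ = 0)
    (hE2 : πm * S * πmᵀ * S⁻¹ = 0)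
    (hE3 : π₁ + S * π₁ᵀ * S⁻¹ - π₁ * S * πmᵀ * S⁻¹ - πm * S * π₁ᵀ * S⁻¹ = 0)
    (hE4 : πm + S * πmᵀ * S⁻¹ - π₁ * S * πmᵀ * S⁻¹ - πm * S * π₁ᵀ * S⁻¹ = 0) :
    πm = S * π₁ᵀ * S⁻¹ ∧
    π₁ * π₁ = π₁ ∧ πm * πm = πm ∧ π₁ * πm = 0 ∧ πm * π₁ = 0 :=
  complementary_poles_are_orthogonal_projectors_general S π₁ πm hS hsum hE1 hE2
end

section
/- Let J ∈ M_N(ℂ) be a constant matrix, λ₁⁺, λ₁⁻ ∈ ℂ, and let q₀, q₁ : ℝ → M_N(ℂ) be functions. Suppose π₁, π₋₁ : ℝ → M_N(ℂ) are differentiable, satisfy π₁(x) + π₋₁(x) = I for all x, and solve the two differential equations i·π₁'(x) + q₁(x)π₁(x) − π₁(x)q₀(x) − λ₁⁻[J, π₁(x)] = 0 and i·π₋₁'(x) + q₁(x)π₋₁(x) − π₋₁(x)q₀(x) − λ₁⁺[J, π₋₁(x)] = 0. Then q₁(x) = q₀(x) + (λ₁⁻ − λ₁⁺)[J, π₁(x)]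 for all x. Moreover, if μ ∈ ℂ is such that q₁(x) = q₀(x) + 2μ(λ₁⁻ − λ₁⁺)[J, π₁(x)] for all x, and λ₁⁻ ≠ λ₁⁺ and [J, π₁(x₀)] ≠ 0 for some x₀, then μ = 1/2. -/
open Matrix

attribute [local instance] Matrix.normedAddCommGroup Matrix.normedSpace

/-! Adding the two pole equations, with `π₋₁ = 1 - π₁` and hence `π₋₁' = -π₁'`, cancels the
derivative terms and leaves `q₁ - q₀ = (λ₁⁻ - λ₁⁺)[J, π₁]`. Comparing with the second
expression for `q₁` at a point where `[J, π₁]` is nonzero gives `1 = 2μ`. -/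

theorem eq_add_smul_commutator_of_dressing {R A : Type*} [CommRing R] [Ring A] [Module R A]
    {c lp lm : R} {J P D Q₀ Q₁ : A}
    (h₁ : c • D + Q₁ * P - P * Q₀ - lm • (J * P - P * J) = 0)
    (h₂ : c • -D + Q₁ * (1 - P) - (1 - P) * Q₀ - lp • (J * (1 - P) - (1 - P) * J) = 0) :
    Q₁ = Q₀ + (lm - lp) • (J * P - P * J) := by
  simp only [mul_sub, sub_mul, mul_one, one_mul] at h₂
  linear_combination (norm := module) h₁ + h₂

theorem eq_half_of_smul_eq_two_mul_smul {K V : Type*} [Field K] [AddCommGroup V] [Module K V]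
    {a μ : K} {v : V} (ha : a ≠ 0) (hv : v ≠ 0) (h : a • v = (2 * μ * a) • v) :
    μ = 1 / 2 := by
  have h2μ : 1 * a = 2 * μ * a := by simpa using smul_left_injective K hv h
  exact eq_one_div_of_mul_eq_one_right (mul_right_cancel₀ ha h2μ).symm

theorem dressed_potential_and_mu_half_general {N : ℕ}
    (J : Matrix (Fin N) (Fin N) ℂ) (lp lm : ℂ)
    (q₀ q₁ π₁ πm : ℝ → Matrix (Fin N) (Fin N) ℂ)
    (hsum : ∀ x, π₁ x + πm x = 1)
    (heq1 : ∀ x, Complex.I • deriv π₁ x + q₁ x * π₁ x - π₁ x * q₀ x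
      - lm • (J * π₁ x - π₁ x * J) = 0)
    (heq2 : ∀ x, Complex.I • deriv πm x + q₁ x * πm x - πm x * q₀ x
      - lp • (J * πm x - πm x * J) = 0) :
    (∀ x, q₁ x = q₀ x + (lm - lp) • (J * π₁ x - π₁ x * J)) ∧
    (∀ μ : ℂ,
      (∀ x, q₁ x = q₀ x + (2 * μ * (lm - lp)) • (J * π₁ x - π₁ x * J)) →
      lm ≠ lp → (∃ x₀, J * π₁ x₀ - π₁ x₀ * J ≠ 0) → μ = 1 / 2) := by
  obtain rfl : πm = fun x => 1 - π₁ x := funext fun x => eq_sub_of_add_eq' (hsum x)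
  have hq₁ (x : ℝ) : q₁ x = q₀ x + (lm - lp) • (J * π₁ x - π₁ x * J) := by
    have hderiv : deriv (fun x => 1 - π₁ x) x = -deriv π₁ x := deriv_const_sub 1
    exact eq_add_smul_commutator_of_dressing (heq1 x) (hderiv ▸ heq2 x)
  refine ⟨hq₁, fun μ hμ hne ⟨x₀, hx₀⟩ => ?_⟩
  refine eq_half_of_smul_eq_two_mul_smul (sub_ne_zero.mpr hne) hx₀ ?_
  exact add_left_cancel ((hq₁ x₀).symm.trans (hμ x₀))

/-- if `π₁ + π₋₁ = 1` and `π₁, π₋₁` satisfy the two dressing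
differential equations, then `q₁ = q₀ + (λ₁⁻ − λ₁⁺)[J, π₁]`; moreover if also
`q₁ = q₀ + 2μ(λ₁⁻ − λ₁⁺)[J, π₁]` with `λ₁⁻ ≠ λ₁⁺` and `[J, π₁(x₀)] ≠ 0` for
some `x₀`, then `μ = 1/2`.  (`lp` stands for `λ₁⁺`, `lm` for `λ₁⁻`.) -/
theorem dressed_potential_and_mu_half {N : ℕ}
    (J : Matrix (Fin N) (Fin N) ℂ) (lp lm : ℂ)
    (q₀ q₁ π₁ πm : ℝ → Matrix (Fin N) (Fin N) ℂ)
    (hπ₁ : Differentiable ℝ π₁) (hπm : Differentiable ℝ πm)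
    (hsum : ∀ x, π₁ x + πm x = 1)
    (heq1 : ∀ x, Complex.I • deriv π₁ x + q₁ x * π₁ x - π₁ x * q₀ x
      - lm • (J * π₁ x - π₁ x * J) = 0)
    (heq2 : ∀ x, Complex.I • deriv πm x + q₁ x * πm x - πm x * q₀ x
      - lp • (J * πm x - πm x * J) = 0) :
    (∀ x, q₁ x = q₀ x + (lm - lp) • (J * π₁ x - π₁ x * J)) ∧
    (∀ μ : ℂ,
      (∀ x, q₁ x = q₀ x + (2 * μ * (lm - lp)) • (J * π₁ x - π₁ x * J)) →
      lm ≠ lp → (∃ x₀, J * π₁ x₀ - π₁ x₀ * J ≠ 0) → μ = 1 / 2) :=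
  dressed_potential_and_mu_half_general J lp lm q₀ q₁ π₁ πm hsum heq1 heq2
end

section
/- Let S be an N×N complex matrix with Sᵀ = S and S² = I, and let π₁ ∈ M_N(ℂ) satisfy π₁² = π₁. Set π₋₁ = Sπ₁ᵀS⁻¹ and assume π₁π₋₁ = π₋₁π₁ = 0. Then for every nonzero c ∈ ℂ, the matrix u(c) = I + (c−1)π₁ + (c⁻¹−1)π₋₁ satisfies u(c)·S·u(c)ᵀ = S, i.e. u(c) belongs to the orthogonal group defined by S. -/
/-!
With `S² = 1` and `Sᵀ = S`, the map `X ↦ S Xᵀ S` is an involutive anti-automorphism exchanging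
`π₁` and `π₋₁`, so `S u(c)ᵀ = u'(c) S` where `u'(c) = 1 + (c-1) π₋₁ + (c⁻¹-1) π₁`. Since `π₁, π₋₁`
are orthogonal idempotents, `u(c) u'(c) = 1 + (c c⁻¹ - 1)(π₁ + π₋₁) = 1`.
-/

open Matrix

theorem one_add_smul_add_smul_mul_swap_eq_one {R A : Type*} [CommRing R] [Ring A] [Algebra R A]
    {p q : A} (hp : IsIdempotentElem p) (hq : IsIdempotentElem q) (hpq : p * q = 0)
    (hqp : q * p = 0) {a b : R} (hab : (1 + a) * (1 + b) = 1) :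
    (1 + a • p + b • q) * (1 + a • q + b • p) = 1 := by
  simp only [mul_add, add_mul, one_mul, mul_one, smul_mul_smul_comm, hp.eq, hq.eq, hpq, hqp,
    smul_zero]
  linear_combination (norm := module) hab • (p + q)

namespace Matrix

variable {n R : Type*} [Fintype n] [DecidableEq n] [CommRing R] {S : Matrix n n R}

theorem isIdempotentElem_mul_transpose_mul (hS2 : S * S = 1) {p : Matrix n n R}
    (hp : IsIdempotentElem p) : IsIdempotentElem (S * pᵀ * S) := by
  calc S * pᵀ * S * (S * pᵀ * S) = S * (p * p)ᵀ * S := by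
        simp only [transpose_mul, mul_assoc, ← mul_assoc S S, hS2, one_mul]
    _ = S * pᵀ * S := by rw [hp.eq]

theorem mul_transpose_mul_mul_self (hS2 : S * S = 1) (X : Matrix n n R) :
    S * Xᵀ * S * S = S * Xᵀ := by
  rw [mul_assoc, hS2, mul_one]

theorem mul_self_eq_self_mul_transpose_mul_transpose (hST : Sᵀ = S) (hS2 : S * S = 1)
    (X : Matrix n n R) : X * S = S * (S * Xᵀ * S)ᵀ := by
  rw [transpose_mul, transpose_mul, transpose_transpose, hST, ← mul_assoc, ← mul_assoc, hS2,
    one_mul]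

theorem mul_transpose_one_add_smul_add_smul {X Y : Matrix n n R} (hX : X * S = S * Yᵀ)
    (hY : Y * S = S * Xᵀ) (a b : R) :
    S * (1 + a • X + b • Y)ᵀ = (1 + a • Y + b • X) * S := by
  simp only [transpose_add, transpose_smul, transpose_one, mul_add, add_mul, mul_one, one_mul,
    Matrix.mul_smul, smul_mul, hX, hY]

end Matrix

/-- if `Sᵀ = S`, `S² = 1`, `π₁` is a projector, `π₋₁ = Sπ₁ᵀS⁻¹` and
`π₁π₋₁ = π₋₁π₁ = 0`, then `u(c) = 1 + (c−1)•π₁ + (c⁻¹−1)•π₋₁` lies in the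
orthogonal group defined by `S`: `u(c) S u(c)ᵀ = S` for all `c ≠ 0`. -/
theorem dressing_factor_in_orthogonal_group {N : ℕ}
    (S π₁ : Matrix (Fin N) (Fin N) ℂ)
    (hST : Sᵀ = S) (hS2 : S * S = 1)
    (hproj : π₁ * π₁ = π₁)
    (πm : Matrix (Fin N) (Fin N) ℂ) (hπm : πm = S * π₁ᵀ * S⁻¹)
    (h1 : π₁ * πm = 0) (h2 : πm * π₁ = 0) :
    ∀ c : ℂ, c ≠ 0 →
      ((1 : Matrix (Fin N) (Fin N) ℂ) + (c - 1) • π₁ + (c⁻¹ - 1) • πm) * S *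
        ((1 : Matrix (Fin N) (Fin N) ℂ) + (c - 1) • π₁ + (c⁻¹ - 1) • πm)ᵀ = S := by
  intro c hc
  rw [inv_eq_right_inv hS2] at hπm
  subst hπm
  have hc' : (1 + (c - 1)) * (1 + (c⁻¹ - 1)) = 1 := by simpa using mul_inv_cancel₀ hc
  rw [mul_assoc, mul_transpose_one_add_smul_add_smul
      (mul_self_eq_self_mul_transpose_mul_transpose hST hS2 π₁) (mul_transpose_mul_mul_self hS2 π₁),
    ← mul_assoc, one_add_smul_add_smul_mul_swap_eq_one hproj
      (isIdempotentElem_mul_transpose_mul hS2 hproj) h1 h2 hc', one_mul]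
end

section
/- Let q₀ : ℝ → M_N(ℂ) be continuous, J ∈ M_N(ℂ) constant, and λ₁⁺, λ₁⁻ ∈ ℂ. Let χ⁺, χ⁻ : ℝ → GL_N(ℂ) be differentiable and satisfy i·(χ±)'(x) + q₀(x)χ±(x) − λ₁± J χ±(x) = 0 for all x. Let n₀, m₀ be constant N×r complex matrices and suppose the r×r matrix R(x) := m₀ᵀ χ⁻(x)⁻¹ χ⁺(x) n₀ is invertible for all x. Define π₁(x) = χ⁺(x) n₀ R(x)⁻¹ m₀ᵀ χ⁻(x)⁻¹. Then π₁(x)² = π₁(x) for all x, and π₁ satisfies the Riccati-type differential equation i·π₁'(x) + [q₀(x), π₁(x)] + λ₁⁻ π₁(x)J − λ₁⁺ J π₁(x) − (λ₁⁻ − λ₁⁺) π₁(x) J π₁(x) = 0 for all x. -/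
/-!
With `U = χ⁺ n₀` and `V = m₀ᵀ (χ⁻)⁻¹` we have `R = V U` and `π₁ = U (V U)⁻¹ V`, an oblique
projector. The ZS equations read `U' = A⁺ U` and `V' = -V A⁻` with `A± = i (q₀ - λ₁± J)`, and for
any `U' = A U`, `V' = V B` the derivative of `P = U (V U)⁻¹ V` is `A P + P B - P (A + B) P`;
with `A + B = -i (λ₁⁺ - λ₁⁻) J` this is the Riccati equation.
-/

open Matrix

attribute [local instance] Matrix.normedAddCommGroup Matrix.normedSpace

section MatrixCalculus

variable {𝕜 𝔽 : Type*} [NontriviallyNormedField 𝕜] [NormedField 𝔽] [NormedAlgebra 𝕜 𝔽]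
  {l m n : Type*} {x : 𝕜}

theorem hasDerivAt_matrix_iff [Fintype n] {f : 𝕜 → Matrix m n 𝔽} {f' : Matrix m n 𝔽} :
    HasDerivAt f f' x ↔ ∀ i j, HasDerivAt (fun y => f y i j) (f' i j) x :=
  hasDerivAt_pi.trans <| forall_congr' fun _ => hasDerivAt_pi

theorem differentiableAt_matrix_iff [Fintype m] [Fintype n] {f : 𝕜 → Matrix m n 𝔽} :
    DifferentiableAt 𝕜 f x ↔ ∀ i j, DifferentiableAt 𝕜 (fun y => f y i j) x :=
  differentiableAt_pi.trans <| forall_congr' fun _ => differentiableAt_pi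

theorem DifferentiableAt.matrix_det [Fintype n] [DecidableEq n] {f : 𝕜 → Matrix n n 𝔽}
    (hf : DifferentiableAt 𝕜 f x) : DifferentiableAt 𝕜 (fun y => (f y).det) x := by
  have hentry := differentiableAt_matrix_iff.mp hf
  simp only [det_apply]
  fun_prop

theorem DifferentiableAt.matrix_updateRow [Fintype m] [Fintype n] [DecidableEq m]
    {f : 𝕜 → Matrix m n 𝔽} (hf : DifferentiableAt 𝕜 f x) (i : m) (b : n → 𝔽) :
    DifferentiableAt 𝕜 (fun y => (f y).updateRow i b) x := by
  refine differentiableAt_matrix_iff.mpr fun k j => ?_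
  rcases eq_or_ne k i with rfl | hk
  · simp only [updateRow_self]
    exact differentiableAt_const _
  · simpa only [updateRow_ne hk] using differentiableAt_matrix_iff.mp hf k j

theorem DifferentiableAt.matrix_inv [CompleteSpace 𝔽] [Fintype n] [DecidableEq n]
    {f : 𝕜 → Matrix n n 𝔽} (hf : DifferentiableAt 𝕜 f x) (hx : IsUnit (f x).det) :
    DifferentiableAt 𝕜 (fun y => (f y)⁻¹) x := by
  refine differentiableAt_matrix_iff.mpr fun i j => ?_
  simp only [inv_def, Ring.inverse_eq_inv', Matrix.smul_apply, adjugate_apply, smul_eq_mul]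
  exact (hf.matrix_det.inv hx.ne_zero).mul (hf.matrix_updateRow j _).matrix_det

theorem HasDerivAt.matrix_mul [Fintype m] [Fintype n] {f : 𝕜 → Matrix l m 𝔽}
    {g : 𝕜 → Matrix m n 𝔽} {f' : Matrix l m 𝔽} {g' : Matrix m n 𝔽}
    (hf : HasDerivAt f f' x) (hg : HasDerivAt g g' x) :
    HasDerivAt (fun y => f y * g y) (f' * g x + f x * g') x := by
  rw [hasDerivAt_matrix_iff] at hf hg ⊢
  intro i j
  simp only [mul_apply, Matrix.add_apply, ← Finset.sum_add_distrib]
  exact HasDerivAt.fun_sum fun k _ => (hf i k).fun_mul (hg k j)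

theorem HasDerivAt.matrix_inv [CompleteSpace 𝔽] [Fintype n] [DecidableEq n]
    {f : 𝕜 → Matrix n n 𝔽} {f' : Matrix n n 𝔽} (hf : HasDerivAt f f' x)
    (hx : IsUnit (f x).det) :
    HasDerivAt (fun y => (f y)⁻¹) (-((f x)⁻¹ * f' * (f x)⁻¹)) x := by
  obtain ⟨g', hg⟩ : ∃ g', HasDerivAt (fun y => (f y)⁻¹) g' x :=
    ⟨_, (hf.differentiableAt.matrix_inv hx).hasDerivAt⟩
  have hunit : (fun y => f y * (f y)⁻¹) =ᶠ[nhds x] fun _ => 1 :=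
    (hf.differentiableAt.matrix_det.continuousAt.eventually_ne hx.ne_zero).mono
      fun y hy => mul_nonsing_inv _ (isUnit_iff_ne_zero.mpr hy)
  have hsum : f' * (f x)⁻¹ + f x * g' = 0 :=
    ((hf.matrix_mul hg).congr_of_eventuallyEq hunit.symm).unique (hasDerivAt_const x 1)
  refine hg.congr_deriv ?_
  calc g' = (f x)⁻¹ * (f x * g') :=
        (nonsing_inv_mul_cancel_left _ _ hx).symm
    _ = -((f x)⁻¹ * f' * (f x)⁻¹) := by
        rw [eq_neg_of_add_eq_zero_right hsum, Matrix.mul_neg, Matrix.mul_assoc]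

end MatrixCalculus

theorem isIdempotentElem_mul_nonsing_inv_mul {α n r : Type*} [CommRing α] [Fintype n]
    [Fintype r] [DecidableEq r] (U : Matrix n r α) (V : Matrix r n α) (h : IsUnit (V * U).det) :
    IsIdempotentElem (U * (V * U)⁻¹ * V) := by
  simp only [IsIdempotentElem, Matrix.mul_assoc]
  rw [← Matrix.mul_assoc V U, nonsing_inv_mul_cancel_left _ _ h]

theorem hasDerivAt_projector_riccati {𝕜 𝔽 : Type*} [NontriviallyNormedField 𝕜] [NormedField 𝔽]
    [NormedAlgebra 𝕜 𝔽] [CompleteSpace 𝔽] {n r : Type*} [Fintype n] [Fintype r] [DecidableEq r]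
    {x : 𝕜} {U : 𝕜 → Matrix n r 𝔽} {V : 𝕜 → Matrix r n 𝔽} {A B : Matrix n n 𝔽}
    (hU : HasDerivAt U (A * U x) x) (hV : HasDerivAt V (V x * B) x)
    (hVU : IsUnit (V x * U x).det) :
    HasDerivAt (fun y => U y * (V y * U y)⁻¹ * V y)
      (A * (U x * (V x * U x)⁻¹ * V x) + U x * (V x * U x)⁻¹ * V x * B
        - U x * (V x * U x)⁻¹ * V x * (A + B) * (U x * (V x * U x)⁻¹ * V x)) x := by
  have hVU' := (hV.matrix_mul hU).matrix_inv hVU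
  refine ((hU.matrix_mul hVU').matrix_mul hV).congr_deriv ?_
  simp only [Matrix.add_mul, Matrix.mul_add, Matrix.mul_assoc, Matrix.neg_mul, Matrix.mul_neg]
  abel

open Complex in
theorem hasDerivAt_of_zakharovShabat {n : Type*} [Fintype n] {χ : ℝ → Matrix n n ℂ}
    {q J : Matrix n n ℂ} {l : ℂ} {x : ℝ} (hχ : DifferentiableAt ℝ χ x)
    (hZS : I • deriv χ x + q * χ x - l • (J * χ x) = 0) :
    HasDerivAt χ (I • (q - l • J) * χ x) x := by
  refine hχ.hasDerivAt.congr_deriv ?_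
  calc deriv χ x = -(I • (I • deriv χ x)) := by rw [smul_smul, I_mul_I, neg_one_smul, neg_neg]
    _ = I • (q - l • J) * χ x := by
        rw [eq_sub_of_add_eq (sub_eq_zero.mp hZS)]
        simp only [Matrix.smul_mul, Matrix.sub_mul, smul_sub]
        abel

theorem rank_r_projector_riccati_general {N r : ℕ}
    (q₀ : ℝ → Matrix (Fin N) (Fin N) ℂ)
    (J : Matrix (Fin N) (Fin N) ℂ) (lp lm : ℂ)
    (χp χm : ℝ → Matrix (Fin N) (Fin N) ℂ)
    (hχp : Differentiable ℝ χp) (hχm : Differentiable ℝ χm)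
    (hχmu : ∀ x, IsUnit (χm x).det)
    (hZSp : ∀ x, Complex.I • deriv χp x + q₀ x * χp x - lp • (J * χp x) = 0)
    (hZSm : ∀ x, Complex.I • deriv χm x + q₀ x * χm x - lm • (J * χm x) = 0)
    (n₀ m₀ : Matrix (Fin N) (Fin r) ℂ)
    (R : ℝ → Matrix (Fin r) (Fin r) ℂ)
    (hRdef : ∀ x, R x = m₀ᵀ * (χm x)⁻¹ * χp x * n₀)
    (hR : ∀ x, IsUnit (R x).det)
    (π₁ : ℝ → Matrix (Fin N) (Fin N) ℂ)
    (hπ₁ : ∀ x, π₁ x = χp x * n₀ * (R x)⁻¹ * m₀ᵀ * (χm x)⁻¹) :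
    ∀ x, π₁ x * π₁ x = π₁ x ∧
      Complex.I • deriv π₁ x + (q₀ x * π₁ x - π₁ x * q₀ x)
        + lm • (π₁ x * J) - lp • (J * π₁ x)
        - (lm - lp) • (π₁ x * J * π₁ x) = 0 := by
  intro x
  set U := fun y => χp y * n₀
  set V := fun y => m₀ᵀ * (χm y)⁻¹
  have hπ : π₁ = fun y => U y * (V y * U y)⁻¹ * V y := by
    funext y
    simp only [U, V, hπ₁, hRdef, Matrix.mul_assoc]
  have hU : HasDerivAt U (Complex.I • (q₀ x - lp • J) * U x) x := by
    refine ((hasDerivAt_of_zakharovShabat (hχp x) (hZSp x)).matrix_mul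
      (hasDerivAt_const x n₀)).congr_deriv ?_
    simp only [U, Matrix.mul_zero, add_zero, Matrix.mul_assoc]
  have hV : HasDerivAt V (V x * -(Complex.I • (q₀ x - lm • J))) x := by
    refine ((hasDerivAt_const x m₀ᵀ).matrix_mul
      ((hasDerivAt_of_zakharovShabat (hχm x) (hZSm x)).matrix_inv (hχmu x))).congr_deriv ?_
    simp only [V, Matrix.zero_mul, zero_add, Matrix.mul_neg, Matrix.mul_assoc,
      mul_nonsing_inv _ (hχmu x), Matrix.mul_one]
  have hVU : IsUnit (V x * U x).det := by simpa only [U, V, hRdef, Matrix.mul_assoc] using hR x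
  have hP := hasDerivAt_projector_riccati hU hV hVU
  rw [← hπ, ← congrFun hπ x] at hP
  refine ⟨congrFun hπ x ▸ isIdempotentElem_mul_nonsing_inv_mul (U x) (V x) hVU, ?_⟩
  rw [show deriv π₁ x = _ from hP.deriv]
  simp only [Matrix.smul_mul, Matrix.mul_smul, Matrix.sub_mul, Matrix.mul_sub, Matrix.add_mul,
    Matrix.mul_add, Matrix.neg_mul, Matrix.mul_neg, Matrix.mul_assoc, smul_sub, smul_add, smul_neg,
    smul_smul]
  match_scalars <;> ring_nf <;> simp only [Complex.I_sq] <;> ring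

/-- the rank-`r` dressing matrix
`π₁ = χ⁺ n₀ R⁻¹ m₀ᵀ (χ⁻)⁻¹` is a projector and satisfies the Riccati-type
differential equation.  (`lp` = `λ₁⁺`, `lm` = `λ₁⁻`.) -/
theorem rank_r_projector_riccati {N r : ℕ}
    (q₀ : ℝ → Matrix (Fin N) (Fin N) ℂ) (hq₀ : Continuous q₀)
    (J : Matrix (Fin N) (Fin N) ℂ) (lp lm : ℂ)
    (χp χm : ℝ → Matrix (Fin N) (Fin N) ℂ)
    (hχp : Differentiable ℝ χp) (hχm : Differentiable ℝ χm)
    (hχpu : ∀ x, IsUnit (χp x).det) (hχmu : ∀ x, IsUnit (χm x).det)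
    (hZSp : ∀ x, Complex.I • deriv χp x + q₀ x * χp x - lp • (J * χp x) = 0)
    (hZSm : ∀ x, Complex.I • deriv χm x + q₀ x * χm x - lm • (J * χm x) = 0)
    (n₀ m₀ : Matrix (Fin N) (Fin r) ℂ)
    (R : ℝ → Matrix (Fin r) (Fin r) ℂ)
    (hRdef : ∀ x, R x = m₀ᵀ * (χm x)⁻¹ * χp x * n₀)
    (hR : ∀ x, IsUnit (R x).det)
    (π₁ : ℝ → Matrix (Fin N) (Fin N) ℂ)
    (hπ₁ : ∀ x, π₁ x = χp x * n₀ * (R x)⁻¹ * m₀ᵀ * (χm x)⁻¹) :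
    ∀ x, π₁ x * π₁ x = π₁ x ∧
      Complex.I • deriv π₁ x + (q₀ x * π₁ x - π₁ x * q₀ x)
        + lm • (π₁ x * J) - lp • (J * π₁ x)
        - (lm - lp) • (π₁ x * J * π₁ x) = 0 :=
  rank_r_projector_riccati_general q₀ J lp lm χp χm hχp hχm hχmu hZSp hZSm n₀ m₀ R hRdef hR π₁ hπ₁
end

section
/- (sl(N) dressing.) Let q₀ : ℝ → M_N(ℂ) be continuous, J ∈ M_N(ℂ) constant, λ₁⁺, λ₁⁻ ∈ ℂ with λ₁⁺ ≠ λ₁⁻. Let χ⁺, χ⁻ : ℝ → GL_N(ℂ) be differentiable with i·(χ±)'(x) + q₀(x)χ±(x) − λ₁± J χ±(x) = 0 for all x. Let n₀, m₀ ∈ ℂ^N be constant vectors and assume ρ(x) := m₀ᵀ χ⁻(x)⁻¹ χ⁺(x) n₀ ≠ 0 for all x. Define P(x) = χ⁺(x) n₀ · ρ(x)⁻¹ · m₀ᵀ χ⁻(x)⁻¹ and q₁(x) = q₀(x) + (λ₁⁻ − λ₁⁺)[J, P(x)]. Then P(x)² = P(x) for all x, and for every λ ∈ ℂ with λ ≠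 λ₁⁻ the matrix u(x,λ) = I + ((λ₁⁻ − λ₁⁺)/(λ − λ₁⁻))·P(x) satisfies i·∂ₓu(x,λ) + q₁(x)u(x,λ) − u(x,λ)q₀(x) − λ[J, u(x,λ)] = 0 for all x. -/
open Matrix

attribute [local instance] Matrix.normedAddCommGroup Matrix.normedSpace

namespace SLNDressingAux

variable {N : ℕ}

lemma hasDerivAt_matrix {f : ℝ → Matrix (Fin N) (Fin N) ℂ} {f' : Matrix (Fin N) (Fin N) ℂ} {x : ℝ} :
    HasDerivAt f f' x ↔ ∀ i j, HasDerivAt (fun y => f y i j) (f' i j) x := by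
  constructor
  · intro h i j
    exact (hasDerivAt_pi.1 ((hasDerivAt_pi.1 h) i)) j
  · intro h
    exact hasDerivAt_pi.2 fun i => hasDerivAt_pi.2 fun j => h i j

lemma hasDerivAt_matMul {f g : ℝ → Matrix (Fin N) (Fin N) ℂ}
    {f' g' : Matrix (Fin N) (Fin N) ℂ} {x : ℝ}
    (hf : HasDerivAt f f' x) (hg : HasDerivAt g g' x) :
    HasDerivAt (fun y => f y * g y) (f' * g x + f x * g') x := by
  rw [hasDerivAt_matrix] at hf hg ⊢
  intro i j
  simp only [Matrix.add_apply, Matrix.mul_apply]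
  refine HasDerivAt.congr_deriv (HasDerivAt.fun_sum fun k _ => ((hf i k).mul (hg k j))) ?_
  rw [← Finset.sum_add_distrib]

lemma differentiableAt_matrix_det {f : ℝ → Matrix (Fin N) (Fin N) ℂ} {x : ℝ}
    (hf : ∀ i j, DifferentiableAt ℝ (fun y => f y i j) x) :
    DifferentiableAt ℝ (fun y => (f y).det) x := by
  simp only [Matrix.det_apply]
  apply DifferentiableAt.fun_sum
  intro σ _
  simp only [Units.smul_def, zsmul_eq_mul]
  exact (differentiableAt_const _).mul
    (DifferentiableAt.fun_finsetProd (fun i _ => hf (σ i) i))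

lemma differentiableAt_matrix_inv {f : ℝ → Matrix (Fin N) (Fin N) ℂ} {x : ℝ}
    (hf : ∀ i j, DifferentiableAt ℝ (fun y => f y i j) x)
    (hu : IsUnit (f x).det) :
    ∀ i j, DifferentiableAt ℝ (fun y => (f y)⁻¹ i j) x := by
  intro i j
  have h1 : ∀ y, (f y)⁻¹ i j = (f y).det⁻¹ * (f y).adjugate i j := by
    intro y; rw [Matrix.inv_def]; simp
  simp only [h1]
  apply DifferentiableAt.mul
  · exact (differentiableAt_matrix_det hf).inv (by simpa using hu.ne_zero)
  · have h2 : ∀ y, (f y).adjugate i j = ((f y).updateRow j (Pi.single i 1)).det := by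
      intro y; rw [Matrix.adjugate_apply]
    simp only [h2]
    apply differentiableAt_matrix_det
    intro a b
    by_cases ha : a = j
    · subst ha; simp only [Matrix.updateRow_self]; exact differentiableAt_const _
    · simp only [Matrix.updateRow_ne ha]; exact hf a b

lemma vecMulVec_factor (A B : Matrix (Fin N) (Fin N) ℂ) (n m : Fin N → ℂ) :
    vecMulVec (A.mulVec n) (vecMul m B) = A * vecMulVec n m * B := by
  ext i j
  simp only [vecMulVec_apply, mul_apply, mulVec, vecMul, dotProduct]
  rw [Finset.sum_mul_sum, Finset.sum_comm]
  congr 1; ext l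
  rw [Finset.sum_mul]
  congr 1; ext k
  ring

lemma vecMulVec_sandwich (n m : Fin N → ℂ) (M : Matrix (Fin N) (Fin N) ℂ) :
    vecMulVec n m * M * vecMulVec n m = (m ⬝ᵥ M.mulVec n) • vecMulVec n m := by
  ext i j
  simp only [mul_apply, vecMulVec_apply, Matrix.smul_apply, dotProduct, mulVec, smul_eq_mul]
  rw [Finset.sum_mul]
  simp only [Finset.sum_mul, Finset.mul_sum]
  rw [Finset.sum_comm]
  congr 1; ext k
  congr 1; ext l
  ring

lemma trace_outer_mul (n m : Fin N → ℂ) (M : Matrix (Fin N) (Fin N) ℂ) :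
    (vecMulVec n m * M).trace = m ⬝ᵥ M.mulVec n := by
  simp only [Matrix.trace, Matrix.diag, mul_apply, vecMulVec_apply, dotProduct, mulVec]
  rw [Finset.sum_comm]
  congr 1; ext j
  rw [Finset.mul_sum]
  congr 1; ext i
  ring

lemma hasDerivAt_trace_mul (K : Matrix (Fin N) (Fin N) ℂ) {Φ : ℝ → Matrix (Fin N) (Fin N) ℂ}
    {Φ' : Matrix (Fin N) (Fin N) ℂ} {x : ℝ}
    (h : HasDerivAt Φ Φ' x) :
    HasDerivAt (fun y => (K * Φ y).trace) ((K * Φ').trace) x := by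
  rw [hasDerivAt_matrix] at h
  simp only [Matrix.trace, Matrix.diag, mul_apply]
  exact HasDerivAt.fun_sum fun i _ => HasDerivAt.fun_sum fun k _ => (h k i).const_mul _

lemma zs_deriv {q : ℝ → Matrix (Fin N) (Fin N) ℂ} {J : Matrix (Fin N) (Fin N) ℂ} {l : ℂ}
    {χ : ℝ → Matrix (Fin N) (Fin N) ℂ} {x : ℝ}
    (h : Complex.I • deriv χ x + q x * χ x - l • (J * χ x) = 0) :
    deriv χ x = Complex.I • (q x * χ x - l • (J * χ x)) := by
  rw [sub_eq_zero] at h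
  have h1 : Complex.I • deriv χ x = l • (J * χ x) - q x * χ x := eq_sub_of_add_eq h
  have h2 := congrArg (fun z => Complex.I • z) h1
  simp only [smul_smul, Complex.I_mul_I, neg_one_smul] at h2
  have h3 := neg_eq_iff_eq_neg.1 h2
  rw [h3]
  module

end SLNDressingAux

set_option maxHeartbeats 2000000 in
open SLNDressingAux in
/-- sl(N) dressing: `P` is a projector and the dressing factor
`u(x,λ) = 1 + ((λ₁⁻−λ₁⁺)/(λ−λ₁⁻)) P(x)` satisfies the dressing-factor equation.
(`lp` = `λ₁⁺`, `lm` = `λ₁⁻`.) -/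
theorem slN_dressing_factor_equation {N : ℕ}
    (q₀ : ℝ → Matrix (Fin N) (Fin N) ℂ) (hq₀ : Continuous q₀)
    (J : Matrix (Fin N) (Fin N) ℂ) (lp lm : ℂ) (hne : lp ≠ lm)
    (χp χm : ℝ → Matrix (Fin N) (Fin N) ℂ)
    (hχp : Differentiable ℝ χp) (hχm : Differentiable ℝ χm)
    (hχpu : ∀ x, IsUnit (χp x).det) (hχmu : ∀ x, IsUnit (χm x).det)
    (hZSp : ∀ x, Complex.I • deriv χp x + q₀ x * χp x - lp • (J * χp x) = 0)
    (hZSm : ∀ x, Complex.I • deriv χm x + q₀ x * χm x - lm • (J * χm x) = 0)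
    (n₀ m₀ : Fin N → ℂ)
    (ρ : ℝ → ℂ)
    (hρdef : ∀ x, ρ x = m₀ ⬝ᵥ ((χm x)⁻¹ * χp x).mulVec n₀)
    (hρ : ∀ x, ρ x ≠ 0)
    (P q₁ : ℝ → Matrix (Fin N) (Fin N) ℂ)
    (hP : ∀ x, P x = (ρ x)⁻¹ •
      vecMulVec ((χp x).mulVec n₀) (Matrix.vecMul m₀ (χm x)⁻¹))
    (hq₁ : ∀ x, q₁ x = q₀ x + (lm - lp) • (J * P x - P x * J)) :
    (∀ x, P x * P x = P x) ∧
    ∀ lam : ℂ, lam ≠ lm → ∀ x,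
      Complex.I • deriv (fun y =>
          (1 : Matrix (Fin N) (Fin N) ℂ) + ((lm - lp) / (lam - lm)) • P y) x
        + q₁ x * ((1 : Matrix (Fin N) (Fin N) ℂ) + ((lm - lp) / (lam - lm)) • P x)
        - ((1 : Matrix (Fin N) (Fin N) ℂ) + ((lm - lp) / (lam - lm)) • P x) * q₀ x
        - lam • (J * ((1 : Matrix (Fin N) (Fin N) ℂ) + ((lm - lp) / (lam - lm)) • P x)
            - ((1 : Matrix (Fin N) (Fin N) ℂ) + ((lm - lp) / (lam - lm)) • P x) * J)
        = 0 := by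
  classical
  set K : Matrix (Fin N) (Fin N) ℂ := vecMulVec n₀ m₀ with hK
  have hPG : ∀ y, P y = (ρ y)⁻¹ • (χp y * K * (χm y)⁻¹) := by
    intro y
    rw [hP y, vecMulVec_factor, hK]
  -- entrywise differentiability of matrix inverse of χm
  have hFdiff : ∀ y, DifferentiableAt ℝ (fun t => (χm t)⁻¹) y := by
    intro y
    refine differentiableAt_pi.2 fun i => differentiableAt_pi.2 fun j => ?_
    exact differentiableAt_matrix_inv
      (fun i j => ((hasDerivAt_matrix.1 (hχm y).hasDerivAt) i j).differentiableAt)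
      (hχmu y) i j
  have master : ∀ x, (P x * P x = P x) ∧ ∃ Pd, HasDerivAt P Pd x ∧
      Complex.I • Pd + q₁ x * P x - P x * q₀ x - lm • (J * P x - P x * J) = 0 := by
    intro x
    have hmF : χm x * (χm x)⁻¹ = 1 := Matrix.mul_nonsing_inv _ (hχmu x)
    have hFm : (χm x)⁻¹ * χm x = 1 := Matrix.nonsing_inv_mul _ (hχmu x)
    have hcancel : ∀ Z : Matrix (Fin N) (Fin N) ℂ, χm x * ((χm x)⁻¹ * Z) = Z := by
      intro Z; rw [← mul_assoc, hmF, one_mul]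
    set Gx : Matrix (Fin N) (Fin N) ℂ := χp x * K * (χm x)⁻¹ with hGx
    set sx : ℂ := (K * ((χm x)⁻¹ * (J * χp x))).trace with hsx
    have hPGx : P x = (ρ x)⁻¹ • Gx := by rw [hPG x]
    -- projector identities
    have hGG : Gx * Gx = ρ x • Gx := by
      have h1 : Gx * Gx = χp x * (K * ((χm x)⁻¹ * χp x) * K) * (χm x)⁻¹ := by
        rw [hGx]; noncomm_ring
      rw [h1, hK, vecMulVec_sandwich, ← hρdef x, ← hK, mul_smul_comm, smul_mul_assoc, ← hGx]
    have hGJG : Gx * (J * Gx) = sx • Gx := by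
      have h1 : Gx * (J * Gx) = χp x * (K * ((χm x)⁻¹ * (J * χp x)) * K) * (χm x)⁻¹ := by
        rw [hGx]; noncomm_ring
      rw [h1, hK, vecMulVec_sandwich, ← trace_outer_mul n₀ m₀, ← hK, ← hsx,
        mul_smul_comm, smul_mul_assoc, ← hGx]
    have hPP : P x * P x = P x := by
      rw [hPGx, smul_mul_assoc, mul_smul_comm, smul_smul, hGG, smul_smul]
      congr 1
      field_simp
    refine ⟨hPP, ?_⟩
    -- derivatives
    have hdp : HasDerivAt χp (Complex.I • (q₀ x * χp x - lp • (J * χp x))) x := by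
      have h := (hχp x).hasDerivAt
      exact h.congr_deriv (zs_deriv (hZSp x))
    have hdm : HasDerivAt χm (Complex.I • (q₀ x * χm x - lm • (J * χm x))) x := by
      have h := (hχm x).hasDerivAt
      exact h.congr_deriv (zs_deriv (hZSm x))
    obtain ⟨Fd, hF⟩ : ∃ d, HasDerivAt (fun t => (χm t)⁻¹) d x := ⟨_, (hFdiff x).hasDerivAt⟩
    have hsum : Complex.I • (q₀ x * χm x - lm • (J * χm x)) * (χm x)⁻¹ + χm x * Fd = 0 := by
      have h1 := hasDerivAt_matMul hdm hF
      have h2 : (fun y => χm y * (χm y)⁻¹) = fun _ => (1 : Matrix (Fin N) (Fin N) ℂ) :=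
        funext fun y => Matrix.mul_nonsing_inv _ (hχmu y)
      rw [h2] at h1
      exact h1.unique (hasDerivAt_const x 1)
    have hFd : Fd = -((χm x)⁻¹ * (Complex.I • (q₀ x * χm x - lm • (J * χm x))) * (χm x)⁻¹) := by
      have h3 : χm x * Fd = -(Complex.I • (q₀ x * χm x - lm • (J * χm x)) * (χm x)⁻¹) := by
        rw [add_comm] at hsum
        exact eq_neg_of_add_eq_zero_left hsum
      calc Fd = (χm x)⁻¹ * (χm x * Fd) := by rw [← mul_assoc, hFm, one_mul]
        _ = (χm x)⁻¹ * -(Complex.I • (q₀ x * χm x - lm • (J * χm x)) * (χm x)⁻¹) := by rw [h3]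
        _ = -((χm x)⁻¹ * (Complex.I • (q₀ x * χm x - lm • (J * χm x))) * (χm x)⁻¹) := by
          rw [mul_neg, mul_assoc]
    -- derivative of G
    have hGd0 : HasDerivAt (fun y => χp y * K * (χm y)⁻¹)
        (Complex.I • (q₀ x * χp x - lp • (J * χp x)) * K * (χm x)⁻¹ + χp x * K * Fd) x := by
      have h := hasDerivAt_matMul (hasDerivAt_matMul hdp (hasDerivAt_const x K)) hF
      rw [mul_zero, add_zero] at h
      exact h
    have hGd_eq : Complex.I • (q₀ x * χp x - lp • (J * χp x)) * K * (χm x)⁻¹ + χp x * K * Fd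
        = Complex.I • (q₀ x * Gx - lp • (J * Gx) + lm • (Gx * J) - Gx * q₀ x) := by
      rw [hFd, hGx]
      simp only [smul_sub, smul_add, sub_mul, mul_sub, add_mul, mul_add, smul_mul_assoc,
        mul_smul_comm, mul_neg, neg_mul, mul_assoc, smul_smul]
      simp only [hcancel, hmF, mul_one]
      module
    rw [hGd_eq] at hGd0
    -- derivative of ρ
    have hΦ : HasDerivAt (fun y => (χm y)⁻¹ * χp y)
        (Fd * χp x + (χm x)⁻¹ * (Complex.I • (q₀ x * χp x - lp • (J * χp x)))) x :=
      hasDerivAt_matMul hF hdp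
    have hΦval : Fd * χp x + (χm x)⁻¹ * (Complex.I • (q₀ x * χp x - lp • (J * χp x)))
        = (lm - lp) • (Complex.I • ((χm x)⁻¹ * (J * χp x))) := by
      rw [hFd]
      simp only [smul_sub, smul_add, sub_mul, mul_sub, add_mul, mul_add, smul_mul_assoc,
        mul_smul_comm, mul_neg, neg_mul, mul_assoc, smul_smul]
      simp only [hcancel, hmF, mul_one]
      module
    rw [hΦval] at hΦ
    have hρfun : (fun y => (K * ((χm y)⁻¹ * χp y)).trace) = ρ := by
      funext y
      rw [hK, trace_outer_mul]
      exact (hρdef y).symm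
    have hρd : HasDerivAt ρ ((lm - lp) * (Complex.I * sx)) x := by
      have h := hasDerivAt_trace_mul K hΦ
      rw [hρfun] at h
      convert h using 1
      rw [hsx]
      simp only [Matrix.mul_smul, Matrix.trace_smul, smul_eq_mul]
      try ring
    have hρinv : HasDerivAt (fun y => (ρ y)⁻¹)
        (((lm - lp) * (Complex.I * sx)) • (-((ρ x) ^ 2)⁻¹)) x := by
      have h := (hasDerivAt_inv (hρ x)).scomp x hρd
      exact h
    have hPd : HasDerivAt P
        ((ρ x)⁻¹ • (Complex.I • (q₀ x * Gx - lp • (J * Gx) + lm • (Gx * J) - Gx * q₀ x))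
          + (((lm - lp) * (Complex.I * sx)) • (-((ρ x) ^ 2)⁻¹)) • Gx) x := by
      have h := hρinv.smul hGd0
      have h2 : (fun y => (ρ y)⁻¹ • (χp y * K * (χm y)⁻¹)) = P := funext fun y => (hPG y).symm
      rw [← h2]
      exact h
    refine ⟨_, hPd, ?_⟩
    -- key identity
    rw [hq₁ x, hPGx]
    have hρx := hρ x
    have hII := Complex.I_mul_I
    simp only [add_mul, mul_add, sub_mul, mul_sub, one_mul, mul_one, smul_mul_assoc,
      mul_smul_comm, smul_smul, smul_sub, smul_add, smul_neg, neg_smul, mul_assoc]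
    rw [hGG, hGJG]
    simp only [mul_smul_comm, smul_smul]
    match_scalars <;> (try ring_nf) <;> (try simp only [Complex.I_sq]) <;>
      field_simp <;> (try ring) <;> (try simp only [Complex.I_sq])  <;> (try ring)
  refine ⟨fun x => (master x).1, ?_⟩
  intro lam hlam x
  obtain ⟨-, Pd, hPd, hkey⟩ := master x
  have hlam' : lam - lm ≠ 0 := sub_ne_zero.2 hlam
  have hu : HasDerivAt (fun y => (1 : Matrix (Fin N) (Fin N) ℂ)
      + ((lm - lp) / (lam - lm)) • P y) (((lm - lp) / (lam - lm)) • Pd) x :=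
    (hPd.const_smul ((lm - lp) / (lam - lm))).const_add 1
  erw [hu.deriv]
  rw [hq₁ x] at hkey ⊢
  calc Complex.I • (((lm - lp) / (lam - lm)) • Pd)
        + (q₀ x + (lm - lp) • (J * P x - P x * J))
            * (1 + ((lm - lp) / (lam - lm)) • P x)
        - (1 + ((lm - lp) / (lam - lm)) • P x) * q₀ x
        - lam • (J * (1 + ((lm - lp) / (lam - lm)) • P x)
            - (1 + ((lm - lp) / (lam - lm)) • P x) * J)
      = ((lm - lp) / (lam - lm)) • (Complex.I • Pd
          + (q₀ x + (lm - lp) • (J * P x - P x * J)) * P x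
          - P x * q₀ x - lm • (J * P x - P x * J)) := by
        simp only [add_mul, mul_add, sub_mul, mul_sub, one_mul, mul_one, smul_mul_assoc,
          mul_smul_comm, smul_smul, smul_sub, smul_add, mul_assoc]
        match_scalars <;> field_simp <;> (try ring)
    _ = 0 := by rw [hkey, smul_zero]
end
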